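/- arXiv:2208.12002 — 3 statements merged into one kernel-verified Lean document; each statement's English description precedes it below -/
import Mathlib

section
/- Let 0 ≤ p < 1 and let K be a smooth strictly convex body in R^n with the origin in its interior such that m ≤ h_K^{1−p} f_K ≤ M on S^{n-1} and (1/ω_n)∫ h_K^p dσ ≥ V(K)^{p/n} V(B)^{−p/n} (automatic for p = 0 or from E_p(K̃) ≥ 1 for origin-symmetric K). Then V(K)^{1−p/n} ≥ m V(B)^{1−p/n}. -/
open MeasureTheory Metric Set
open scoped RealInnerProductSpace

noncomputable def sphereMeasure (n : ℕ) : Measure (sphere (0 : EuclideanSpace ℝ (Fin n)) 1) :=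
  (volume : Measure (EuclideanSpace ℝ (Fin n))).toSphere

/-- Lower volume bound: if `0 ≤ p < 1`, `m ≤ h^{1−p} f ≤ M` and
`(1/ω_n)∫ h^p dσ ≥ (V(K)/V(B))^{p/n}`, then `V(K)^{1−p/n} ≥ m V(B)^{1−p/n}`. -/
theorem lower_volume_bound {n : ℕ} (hn : 1 ≤ n) (p m M VK VB : ℝ)
    (hp0 : 0 ≤ p) (hp1 : p < 1) (hm : 0 < m) (hmM : m ≤ M)
    (h f : sphere (0 : EuclideanSpace ℝ (Fin n)) 1 → ℝ)
    (hhc : Continuous h) (hfc : Continuous f) (hh : ∀ u, 0 < h u) (hf : ∀ u, 0 < f u)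
    (hVB : VB = (volume (ball (0 : EuclideanSpace ℝ (Fin n)) 1)).toReal)
    (hVK : VK = (1 / (n : ℝ)) * ∫ u, h u * f u ∂(sphereMeasure n))
    (hpinch : ∀ u, m ≤ (h u) ^ (1 - p) * f u ∧ (h u) ^ (1 - p) * f u ≤ M)
    (hwidth : VK ^ (p / n) * VB ^ (-(p / n)) ≤
      (1 / (sphereMeasure n Set.univ).toReal) * ∫ u, (h u) ^ p ∂(sphereMeasure n)) :
    m * VB ^ (1 - p / n) ≤ VK ^ (1 - p / n) := by
  have hnR : (0 : ℝ) < n := by exact_mod_cast hn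
  have hVBpos : 0 < VB := by
    rw [hVB]
    exact ENNReal.toReal_pos (measure_ball_pos _ _ one_pos).ne' measure_ball_lt_top.ne
  haveI : IsFiniteMeasure (sphereMeasure n) := by unfold sphereMeasure; infer_instance
  -- total sphere measure
  have hσuniv : (sphereMeasure n Set.univ).toReal = n * VB := by
    rw [sphereMeasure, Measure.toSphere_apply_univ, hVB, finrank_euclideanSpace_fin]
    simp [ENNReal.toReal_mul]
  have hσpos : 0 < (sphereMeasure n Set.univ).toReal := by
    rw [hσuniv]; positivity
  -- integrability
  have hcp : Continuous fun u => (h u) ^ p :=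
    hhc.rpow_const fun u => Or.inl (hh u).ne'
  have hint1 : Integrable (fun u => (h u) ^ p) (sphereMeasure n) :=
    hcp.integrable_of_hasCompactSupport (HasCompactSupport.of_compactSpace _)
  have hint2 : Integrable (fun u => h u * f u) (sphereMeasure n) :=
    (hhc.mul hfc).integrable_of_hasCompactSupport (HasCompactSupport.of_compactSpace _)
  -- pointwise bound
  have hpt : ∀ u, m * (h u) ^ p ≤ h u * f u := by
    intro u
    have hrw : h u * f u = (h u) ^ p * ((h u) ^ (1 - p) * f u) := by
      rw [← mul_assoc, ← Real.rpow_add (hh u)]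
      simp
    rw [hrw, mul_comm m]
    exact mul_le_mul_of_nonneg_left (hpinch u).1 (Real.rpow_nonneg (hh u).le _)
  -- integral bound
  have hIle : m * ∫ u, (h u) ^ p ∂(sphereMeasure n) ≤ ∫ u, h u * f u ∂(sphereMeasure n) := by
    calc m * ∫ u, (h u) ^ p ∂(sphereMeasure n)
        = ∫ u, m * (h u) ^ p ∂(sphereMeasure n) := (integral_const_mul _ _).symm
      _ ≤ ∫ u, h u * f u ∂(sphereMeasure n) :=
          integral_mono (hint1.const_mul m) hint2 hpt
  -- VK is positive
  have hVKpos : 0 < VK := by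
    rw [hVK]
    apply mul_pos (by positivity)
    rw [integral_pos_iff_support_of_nonneg (fun u => (mul_pos (hh u) (hf u)).le) hint2]
    have hs : (Function.support fun u => h u * f u) = Set.univ := by
      ext u; simp [Function.support]
      exact ⟨(hh u).ne', (hf u).ne'⟩
    rw [hs]
    exact (ENNReal.toReal_pos_iff.mp hσpos).1
  -- lower bound on ∫ h^p from hwidth
  have hw2 : VK ^ (p / n) * VB ^ (-(p / n)) * (sphereMeasure n Set.univ).toReal ≤
      ∫ u, (h u) ^ p ∂(sphereMeasure n) := by
    have hw := hwidth
    rw [one_div, ← div_eq_inv_mul] at hw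
    exact (le_div_iff₀ hσpos).mp hw
  have hIlow : (n : ℝ) * VB * (VK ^ (p / n) * VB ^ (-(p / n))) ≤
      ∫ u, (h u) ^ p ∂(sphereMeasure n) := by
    rw [← hσuniv]
    calc (sphereMeasure n Set.univ).toReal * (VK ^ (p / n) * VB ^ (-(p / n)))
        = VK ^ (p / n) * VB ^ (-(p / n)) * (sphereMeasure n Set.univ).toReal := mul_comm _ _
      _ ≤ _ := hw2
  -- combine
  have h1 : m * ((n : ℝ) * VB * (VK ^ (p / n) * VB ^ (-(p / n)))) ≤
      ∫ u, h u * f u ∂(sphereMeasure n) :=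
    le_trans (mul_le_mul_of_nonneg_left hIlow hm.le) hIle
  have hInt : ∫ u, h u * f u ∂(sphereMeasure n) = n * VK := by
    rw [hVK]; field_simp
  rw [hInt] at h1
  have hVBrw : VB * VB ^ (-(p / n)) = VB ^ (1 - p / n) := by
    nth_rewrite 1 [← Real.rpow_one VB]
    rw [← Real.rpow_add hVBpos, ← sub_eq_add_neg]
  have hmain : m * VB ^ (1 - p / n) * VK ^ (p / n) ≤ VK := by
    have h2 : m * VB ^ (1 - p / n) * VK ^ (p / n) * n ≤ VK * n := by
      calc m * VB ^ (1 - p / n) * VK ^ (p / n) * n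
          = m * ((n : ℝ) * VB * (VK ^ (p / n) * VB ^ (-(p / n)))) := by
            rw [← hVBrw]; ring
        _ ≤ n * VK := h1
        _ = VK * n := mul_comm _ _
    exact le_of_mul_le_mul_right h2 hnR
  have hVKrw : VK = VK ^ (1 - p / n) * VK ^ (p / n) := by
    rw [← Real.rpow_add hVKpos]
    norm_num
  exact le_of_mul_le_mul_right (hmain.trans_eq hVKrw) (Real.rpow_pos_of_pos hVKpos _)
end

section
/- Let 0 ≤ p < 1, q = p + 1, and let K be an origin-symmetric smooth strictly convex body in R^n with m ≤ h_K^{1−p} f_K ≤ M on S^{n-1}. Assume the L_q-Minkowski inequality (1/n)∫ h_B^q h_K^{1−q} dS_K ≥ V(K)^{1−q/n} V(B)^{q/n} and the lower volume bound V(K)^{1−p/n} ≥ m V(B)^{1−p/n}. Then (1/ω_n) ∫ h_{K̃}^{−1} dσ ≥ m/M, where K̃ is the dilate of K with V(K̃) = V(B). -/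
open MeasureTheory Metric Set
open scoped RealInnerProductSpace

/-- For `0 ≤ p < 1`, `q = p + 1`, an origin-symmetric smooth strictly convex body with
`m ≤ h^{1−p} f ≤ M`, the `L_q`-Minkowski inequality and the lower volume bound imply
`(1/ω_n) ∫ h_{K̃}^{−1} dσ ≥ m/M`. -/
theorem normalized_inv_width_ge {n : ℕ} (hn : 1 ≤ n) (p q m M VK VB : ℝ)
    (hp0 : 0 ≤ p) (hp1 : p < 1) (hq : q = p + 1) (hm : 0 < m) (hmM : m ≤ M)
    (h f : sphere (0 : EuclideanSpace ℝ (Fin n)) 1 → ℝ)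
    (hhc : Continuous h) (hfc : Continuous f) (hh : ∀ u, 0 < h u) (hf : ∀ u, 0 < f u)
    (hsymm : ∀ u v : sphere (0 : EuclideanSpace ℝ (Fin n)) 1,
      (v : EuclideanSpace ℝ (Fin n)) = -(u : EuclideanSpace ℝ (Fin n)) →
        h v = h u ∧ f v = f u)
    (hVB : VB = (volume (ball (0 : EuclideanSpace ℝ (Fin n)) 1)).toReal)
    (hVK : VK = (1 / (n : ℝ)) * ∫ u, h u * f u ∂(sphereMeasure n))
    (hpinch : ∀ u, m ≤ (h u) ^ (1 - p) * f u ∧ (h u) ^ (1 - p) * f u ≤ M)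
    -- the `L_q`-Minkowski inequality with `L = B`:
    (hMinkq : VK ^ (1 - q / n) * VB ^ (q / n) ≤
      (1 / (n : ℝ)) * ∫ u, (h u) ^ (1 - q) * f u ∂(sphereMeasure n))
    -- the lower volume bound:
    (hvolb : m * VB ^ (1 - p / n) ≤ VK ^ (1 - p / n)) :
    m / M ≤ (1 / (sphereMeasure n Set.univ).toReal) *
      ∫ u, ((VB / VK) ^ (1 / (n : ℝ)) * h u)⁻¹ ∂(sphereMeasure n) := by
  have hM : 0 < M := lt_of_lt_of_le hm hmM
  have hn0 : (0:ℝ) < n := by exact_mod_cast hn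
  haveI : IsFiniteMeasure (sphereMeasure n) := by
    unfold sphereMeasure; infer_instance
  have hvolball : (volume (ball (0 : EuclideanSpace ℝ (Fin n)) 1)) ≠ ⊤ :=
    measure_ball_lt_top.ne
  have hVBpos : 0 < VB := by
    rw [hVB]
    exact ENNReal.toReal_pos (measure_ball_pos _ _ one_pos).ne' hvolball
  have homega : (sphereMeasure n Set.univ).toReal = n * VB := by
    rw [hVB, sphereMeasure, Measure.toSphere_apply_univ, ENNReal.toReal_mul]
    simp [finrank_euclideanSpace_fin]
  have hint : ∀ g : sphere (0 : EuclideanSpace ℝ (Fin n)) 1 → ℝ, Continuous g →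
      Integrable g (sphereMeasure n) := by
    intro g hg
    exact hg.integrable_of_hasCompactSupport (HasCompactSupport.of_compactSpace g)
  have hhfint : Integrable (fun u => h u * f u) (sphereMeasure n) :=
    hint _ (hhc.mul hfc)
  have hVKpos : 0 < VK := by
    rw [hVK]
    apply mul_pos (by positivity)
    rw [integral_pos_iff_support_of_nonneg
      (fun u => (mul_pos (hh u) (hf u)).le) hhfint]
    have hsupp : Function.support (fun u => h u * f u) = Set.univ := by
      ext u; simp only [Function.mem_support, Set.mem_univ, iff_true]
      exact (mul_pos (hh u) (hf u)).ne'
    rw [hsupp]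
    have hne : (sphereMeasure n) Set.univ ≠ 0 := by
      intro h0
      have h1 := homega
      rw [h0] at h1
      simp only [ENNReal.toReal_zero] at h1
      nlinarith
    exact hne.bot_lt
  -- pointwise bound: h^{1-q} f ≤ M * h⁻¹
  have hpt : ∀ u, (h u) ^ (1 - q) * f u ≤ M * (h u)⁻¹ := by
    intro u
    have h1 : (h u) ^ (1 - q) = (h u) ^ (1 - p) * (h u)⁻¹ := by
      rw [← Real.rpow_neg_one (h u), ← Real.rpow_add (hh u)]
      congr 1
      rw [hq]; ring
    rw [h1, mul_right_comm]
    exact mul_le_mul_of_nonneg_right ((hpinch u).2) (inv_nonneg.2 (hh u).le)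
  have hinvc : Continuous fun u => (h u)⁻¹ := hhc.inv₀ (fun u => (hh u).ne')
  have hintinv : Integrable (fun u => (h u)⁻¹) (sphereMeasure n) := hint _ hinvc
  have hintq : Integrable (fun u => (h u) ^ (1 - q) * f u) (sphereMeasure n) := by
    apply hint
    exact (hhc.rpow_const (fun u => Or.inl (hh u).ne')).mul hfc
  have hIbound : (n : ℝ) * (VK ^ (1 - q / n) * VB ^ (q / n)) ≤
      M * ∫ u, (h u)⁻¹ ∂(sphereMeasure n) := by
    have h2 : ∫ u, (h u) ^ (1 - q) * f u ∂(sphereMeasure n) ≤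
        ∫ u, M * (h u)⁻¹ ∂(sphereMeasure n) :=
      integral_mono hintq (hintinv.const_mul M) hpt
    rw [integral_const_mul] at h2
    calc (n : ℝ) * (VK ^ (1 - q / n) * VB ^ (q / n))
        ≤ (n : ℝ) * ((1 / (n : ℝ)) * ∫ u, (h u) ^ (1 - q) * f u ∂(sphereMeasure n)) :=
          mul_le_mul_of_nonneg_left hMinkq hn0.le
      _ = ∫ u, (h u) ^ (1 - q) * f u ∂(sphereMeasure n) := by field_simp
      _ ≤ M * ∫ u, (h u)⁻¹ ∂(sphereMeasure n) := h2
  set c : ℝ := (VB / VK) ^ (1 / (n : ℝ)) with hc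
  have hcpos : 0 < c := Real.rpow_pos_of_pos (div_pos hVBpos hVKpos) _
  have hgoal_int : ∫ u, (c * h u)⁻¹ ∂(sphereMeasure n) =
      c⁻¹ * ∫ u, (h u)⁻¹ ∂(sphereMeasure n) := by
    simp_rw [mul_inv]
    exact integral_const_mul _ _
  rw [hgoal_int, homega]
  have hIpos : (0:ℝ) ≤ ∫ u, (h u)⁻¹ ∂(sphereMeasure n) :=
    integral_nonneg (fun u => (inv_nonneg.2 (hh u).le))
  have hcinv : c⁻¹ = VK ^ (1 / (n:ℝ)) / VB ^ (1 / (n:ℝ)) := by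
    rw [hc, ← Real.inv_rpow (div_pos hVBpos hVKpos).le, inv_div,
      Real.div_rpow hVKpos.le hVBpos.le]
  -- key chain
  have key : m ≤ (1 / ((n:ℝ) * VB)) * (c⁻¹ * ((n:ℝ) * (VK ^ (1 - q / n) * VB ^ (q / n)))) := by
    have ha : (0:ℝ) < VK ^ (1/(n:ℝ)) := Real.rpow_pos_of_pos hVKpos _
    have hb : (0:ℝ) < VB ^ (1/(n:ℝ)) := Real.rpow_pos_of_pos hVBpos _
    have hX : (0:ℝ) < VK ^ (1 - p/(n:ℝ)) := Real.rpow_pos_of_pos hVKpos _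
    have hY : (0:ℝ) < VB ^ (1 - p/(n:ℝ)) := Real.rpow_pos_of_pos hVBpos _
    have eK : VK ^ (1 - q/(n:ℝ)) = VK ^ (1 - p/(n:ℝ)) / VK ^ (1/(n:ℝ)) := by
      rw [← Real.rpow_sub hVKpos]
      congr 1
      rw [hq]; field_simp; ring
    have eB0 : VB ^ (q/(n:ℝ)) * VB ^ (1 - p/(n:ℝ)) = VB * VB ^ (1/(n:ℝ)) := by
      have hexp : q/(n:ℝ) + (1 - p/(n:ℝ)) = 1 + 1/(n:ℝ) := by
        rw [hq]; field_simp; ring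
      rw [← Real.rpow_add hVBpos, hexp, Real.rpow_add hVBpos, Real.rpow_one]
    have eB : VB ^ (q/(n:ℝ)) = VB * VB ^ (1/(n:ℝ)) / VB ^ (1 - p/(n:ℝ)) := by
      rw [eq_div_iff hY.ne']; exact eB0
    have e1 : (1 / ((n:ℝ) * VB)) * (c⁻¹ * ((n:ℝ) * (VK ^ (1 - q / n) * VB ^ (q / n))))
        = VK ^ (1 - p/(n:ℝ)) / VB ^ (1 - p/(n:ℝ)) := by
      rw [hcinv, eK, eB]
      field_simp
    rw [e1, le_div_iff₀ hY]
    linarith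
  rw [div_le_iff₀ hM]
  calc m ≤ (1 / ((n:ℝ) * VB)) * (c⁻¹ * ((n:ℝ) * (VK ^ (1 - q / n) * VB ^ (q / n)))) := key
    _ ≤ (1 / ((n:ℝ) * VB)) * (c⁻¹ * (M * ∫ u, (h u)⁻¹ ∂(sphereMeasure n))) := by
        apply mul_le_mul_of_nonneg_left _ (by positivity)
        exact mul_le_mul_of_nonneg_left hIbound (inv_nonneg.2 hcpos.le)
    _ = (1 / ((n:ℝ) * VB)) * (c⁻¹ * ∫ u, (h u)⁻¹ ∂(sphereMeasure n)) * M := by ring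
end

section
/- Let K be a smooth strictly convex body in R^2 with origin in its interior, support function h and curvature function f, with centro-affine curvature H = (h^3 f)^{−1} satisfying H ≥ m > 0. Assume V(K) ≥ π/√M where M = max H. Then V(K) V(K^*) ≥ (∫ h f H^{1/3} dσ)^3 / (4 ∫ h f dσ) ≥ m V(K)^2. -/
open MeasureTheory Metric Set

/-- Planar volume-product lower bound via the centro-affine curvature `H = (h³f)⁻¹`:
`V(K) V(K^*) ≥ (∫ h f H^{1/3} dσ)³ / (4 ∫ h f dσ) ≥ m V(K)²`. -/
theorem planar_volume_product_lower_bound (m M : ℝ) (hm : 0 < m) (hmM : m ≤ M)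
    (h f : sphere (0 : EuclideanSpace ℝ (Fin 2)) 1 → ℝ)
    (hhc : Continuous h) (hfc : Continuous f) (hh : ∀ u, 0 < h u) (hf : ∀ u, 0 < f u)
    (H : sphere (0 : EuclideanSpace ℝ (Fin 2)) 1 → ℝ)
    (hH : ∀ u, H u = ((h u) ^ 3 * f u)⁻¹)
    (hHm : ∀ u, m ≤ H u) (hHM : ∀ u, H u ≤ M)
    (hVlb : Real.pi / Real.sqrt M ≤ (1 / 2) * ∫ u, h u * f u ∂(sphereMeasure 2)) :
    (∫ u, h u * f u * (H u) ^ ((1 : ℝ) / 3) ∂(sphereMeasure 2)) ^ 3 /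
        (4 * ∫ u, h u * f u ∂(sphereMeasure 2)) ≤
      ((1 / 2) * ∫ u, h u * f u ∂(sphereMeasure 2)) *
        ((1 / 2) * ∫ u, (h u)⁻¹ ^ 2 ∂(sphereMeasure 2)) ∧
    m * ((1 / 2) * ∫ u, h u * f u ∂(sphereMeasure 2)) ^ 2 ≤
      (∫ u, h u * f u * (H u) ^ ((1 : ℝ) / 3) ∂(sphereMeasure 2)) ^ 3 /
        (4 * ∫ u, h u * f u ∂(sphereMeasure 2)) := by
  set μ := sphereMeasure 2 with hμ
  set g : sphere (0 : EuclideanSpace ℝ (Fin 2)) 1 → ℝ := fun u => h u * f u with hg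
  have hgpos : ∀ u, 0 < g u := fun u => mul_pos (hh u) (hf u)
  have hgc : Continuous g := hhc.mul hfc
  have hHpos : ∀ u, 0 < H u := fun u => by
    have h1 := hh u; have h2 := hf u
    rw [hH u]; positivity
  have hHc : Continuous H := by
    have : Continuous fun u => ((h u) ^ 3 * f u)⁻¹ :=
      ((hhc.pow 3).mul hfc).inv₀ (fun u => (mul_pos (pow_pos (hh u) 3) (hf u)).ne')
    exact this.congr fun u => (hH u).symm
  -- the key pointwise identity : h⁻² = g * H
  have hkey : ∀ u, (h u)⁻¹ ^ 2 = g u * H u := fun u => by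
    have h1 := (hh u).ne'; have h2 := (hf u).ne'
    rw [hH u, hg]
    field_simp
  -- integrability of continuous functions on the compact sphere
  haveI : IsFiniteMeasure μ := by
    rw [hμ]; unfold sphereMeasure; infer_instance
  have hmem : ∀ (φ : sphere (0 : EuclideanSpace ℝ (Fin 2)) 1 → ℝ), Continuous φ →
      ∀ p : ENNReal, MemLp φ p μ := fun φ hφ p =>
    hφ.memLp_of_hasCompactSupport (HasCompactSupport.of_compactSpace φ)
  have hint : ∀ (φ : sphere (0 : EuclideanSpace ℝ (Fin 2)) 1 → ℝ), Continuous φ →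
      Integrable φ μ := fun φ hφ => memLp_one_iff_integrable.mp (hmem φ hφ 1)
  set A : ℝ := ∫ u, g u ∂μ with hA
  set B : ℝ := ∫ u, g u * (H u) ^ ((1 : ℝ) / 3) ∂μ with hB
  set C : ℝ := ∫ u, (h u)⁻¹ ^ 2 ∂μ with hC
  have hMpos : 0 < M := lt_of_lt_of_le hm hmM
  have hApos : 0 < A := by
    have h1 : 0 < Real.pi / Real.sqrt M := by positivity
    nlinarith [lt_of_lt_of_le h1 hVlb]
  have hBnn : 0 ≤ B :=
    integral_nonneg fun u => mul_nonneg (hgpos u).le (Real.rpow_nonneg (hHpos u).le _)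
  have hCnn : 0 ≤ C := integral_nonneg fun u => by positivity
  have hH13c : Continuous fun u => (H u) ^ ((1 : ℝ) / 3) :=
    hHc.rpow_const fun u => Or.inr (by norm_num)
  -- Hölder's inequality : B ≤ A^{2/3} C^{1/3}
  have hpq : Real.HolderConjugate (3 / 2) 3 := ⟨by norm_num, by norm_num, by norm_num⟩
  have hucont : Continuous fun u => (g u) ^ ((2 : ℝ) / 3) :=
    hgc.rpow_const fun u => Or.inr (by norm_num)
  have hvcont : Continuous fun u => ((h u)⁻¹ ^ 2) ^ ((1 : ℝ) / 3) :=
    ((hhc.inv₀ fun u => (hh u).ne').pow 2).rpow_const fun u => Or.inr (by norm_num)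
  have key := integral_mul_le_Lp_mul_Lq_of_nonneg (μ := μ) hpq
    (Filter.Eventually.of_forall fun u => Real.rpow_nonneg (hgpos u).le _)
    (Filter.Eventually.of_forall fun u => Real.rpow_nonneg (by positivity) _)
    (hmem _ hucont _) (hmem _ hvcont _)
  have e1 : (∫ u, (g u) ^ ((2 : ℝ) / 3) * ((h u)⁻¹ ^ 2) ^ ((1 : ℝ) / 3) ∂μ) = B := by
    refine integral_congr_ae (Filter.Eventually.of_forall fun u => ?_)
    dsimp only
    rw [hkey u, Real.mul_rpow (hgpos u).le (hHpos u).le, ← mul_assoc,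
      ← Real.rpow_add (hgpos u)]
    norm_num
  have e2 : (∫ u, ((g u) ^ ((2 : ℝ) / 3)) ^ ((3 : ℝ) / 2) ∂μ) = A := by
    refine integral_congr_ae (Filter.Eventually.of_forall fun u => ?_)
    dsimp only
    rw [← Real.rpow_mul (hgpos u).le]
    norm_num
  have e3 : (∫ u, (((h u)⁻¹ ^ 2) ^ ((1 : ℝ) / 3)) ^ ((3 : ℝ)) ∂μ) = C := by
    refine integral_congr_ae (Filter.Eventually.of_forall fun u => ?_)
    dsimp only
    rw [← Real.rpow_mul (by positivity : (0:ℝ) ≤ (h u)⁻¹ ^ 2)]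
    norm_num
  rw [e1, e2, e3] at key
  have key' : B ≤ A ^ ((2 : ℝ) / 3) * C ^ ((1 : ℝ) / 3) := by
    rw [show ((2:ℝ)/3) = 1/(3/2) by norm_num]
    exact key
  -- cube it : B³ ≤ A² C
  have hcube : B ^ 3 ≤ A ^ 2 * C := by
    have h1 : B ^ 3 ≤ (A ^ ((2 : ℝ) / 3) * C ^ ((1 : ℝ) / 3)) ^ 3 :=
      pow_le_pow_left₀ hBnn key' 3
    calc B ^ 3 ≤ (A ^ ((2 : ℝ) / 3) * C ^ ((1 : ℝ) / 3)) ^ 3 := h1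
    _ = (A ^ ((2 : ℝ) / 3)) ^ (3 : ℕ) * (C ^ ((1 : ℝ) / 3)) ^ (3 : ℕ) := by ring
    _ = A ^ ((2:ℝ)/3 * 3) * C ^ ((1:ℝ)/3 * 3) := by
        rw [← Real.rpow_natCast (A ^ ((2:ℝ)/3)) 3, ← Real.rpow_natCast (C ^ ((1:ℝ)/3)) 3,
          ← Real.rpow_mul hApos.le, ← Real.rpow_mul hCnn]
        norm_num
    _ = A ^ (2:ℝ) * C ^ (1:ℝ) := by norm_num
    _ = A ^ 2 * C := by
        rw [Real.rpow_one, show ((2:ℝ)) = ((2:ℕ):ℝ) by norm_num, Real.rpow_natCast]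
  -- lower bound : m^{1/3} A ≤ B
  have hlow : m ^ ((1 : ℝ) / 3) * A ≤ B := by
    rw [hA, hB, ← integral_const_mul]
    refine integral_mono (Integrable.const_mul (hint g hgc) _)
      (hint _ (hgc.mul hH13c)) fun u => ?_
    rw [mul_comm (m ^ ((1:ℝ)/3))]
    exact mul_le_mul_of_nonneg_left
      (Real.rpow_le_rpow hm.le (hHm u) (by norm_num)) (hgpos u).le
  have hmA3 : m * A ^ 3 ≤ B ^ 3 := by
    have h1 : (m ^ ((1 : ℝ) / 3) * A) ^ 3 ≤ B ^ 3 :=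
      pow_le_pow_left₀ (by positivity) hlow 3
    calc m * A ^ 3 = (m ^ ((1:ℝ)/3)) ^ (3:ℕ) * A ^ 3 := by
          rw [← Real.rpow_natCast (m ^ ((1:ℝ)/3)) 3, ← Real.rpow_mul hm.le]
          norm_num [Real.rpow_one]
    _ = (m ^ ((1 : ℝ) / 3) * A) ^ 3 := by ring
    _ ≤ B ^ 3 := h1
  constructor
  · calc B ^ 3 / (4 * A) ≤ A ^ 2 * C / (4 * A) := by gcongr
    _ = 1 / 2 * A * (1 / 2 * C) := by field_simp; ring
  · calc m * (1 / 2 * A) ^ 2 = m * A ^ 3 / (4 * A) := by field_simp; ring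
    _ ≤ B ^ 3 / (4 * A) := by gcongr
end
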